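/- arXiv:2303.17957 — 3 statements merged into one kernel-verified Lean document; each statement's English description precedes it below -/
import Mathlib

section
/- Gibbs variational principle: for a fixed pmf q on a finite type U with q(u) > 0 for all u, and a function c : U → ℝ, the functional J(p) = D_KL(p||q) + Σ_u p(u) c(u) over pmfs p attains its unique minimum at p*(u) = q(u)·exp(−c(u)) / Σ_{u'} q(u')·exp(−c(u')), and the minimum value equals −log( Σ_u q(u)·exp(−c(u)) ). -/
noncomputable def KL {α : Type*} [Fintype α] (p q : α → ℝ) : ℝ :=
  ∑ x, p x * Real.log (p x / q x)

lemma gibbs_term_ineq {a b : ℝ} (ha : 0 ≤ a) (hb : 0 < b) :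
    a - b ≤ a * Real.log (a / b) ∧ (a ≠ b → a - b < a * Real.log (a / b)) := by
  rcases eq_or_lt_of_le ha with h0 | h0
  · simp only [← h0, zero_mul, zero_sub]
    exact ⟨by linarith, fun _ => by linarith⟩
  · have h1 : Real.log (a / b) = - Real.log (b / a) := by
      rw [← Real.log_inv, inv_div]
    have hba : a * (b / a - 1) = b - a := by field_simp
    constructor
    · have hlog : Real.log (b / a) ≤ b / a - 1 :=
        Real.log_le_sub_one_of_pos (by positivity)
      have h2 : a * Real.log (b / a) ≤ b - a := by
        have := mul_le_mul_of_nonneg_left hlog h0.le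
        linarith
      rw [h1, mul_neg]; linarith
    · intro hne
      have hne1 : b / a ≠ 1 := by
        intro h
        exact hne ((div_eq_one_iff_eq h0.ne').mp h).symm
      have hlog : Real.log (b / a) < b / a - 1 :=
        Real.log_lt_sub_one_of_pos (by positivity) hne1
      have h2 : a * Real.log (b / a) < b - a := by
        have := mul_lt_mul_of_pos_left hlog h0
        linarith
      rw [h1, mul_neg]; linarith

lemma kl_nonneg_strict {α : Type*} [Fintype α] (p r : α → ℝ)
    (hp : ∀ x, 0 ≤ p x) (hr : ∀ x, 0 < r x)
    (hps : ∑ x, p x = 1) (hrs : ∑ x, r x = 1) :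
    0 ≤ KL p r ∧ (KL p r = 0 → p = r) := by
  have hterm : ∀ x, p x - r x ≤ p x * Real.log (p x / r x) :=
    fun x => (gibbs_term_ineq (hp x) (hr x)).1
  have hKL : KL p r = ∑ x, (p x * Real.log (p x / r x) - (p x - r x)) := by
    unfold KL
    rw [Finset.sum_sub_distrib, Finset.sum_sub_distrib, hps, hrs]
    ring
  have hnn : ∀ x ∈ Finset.univ, (0 : ℝ) ≤ p x * Real.log (p x / r x) - (p x - r x) :=
    fun x _ => by linarith [hterm x]
  constructor
  · rw [hKL]; exact Finset.sum_nonneg hnn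
  · intro h0
    funext x
    by_contra hne
    have hstrict := (gibbs_term_ineq (hp x) (hr x)).2 hne
    have hpos : 0 < ∑ x, (p x * Real.log (p x / r x) - (p x - r x)) :=
      Finset.sum_pos' hnn ⟨x, Finset.mem_univ x, by linarith⟩
    rw [hKL] at h0; linarith

/-- Gibbs variational principle: the functional `p ↦ D_KL(p‖q) + E_p[c]`
attains its unique minimum over pmfs at the exponentially twisted pmf, and the
minimum value is `-log Σ_u q u * exp (-(c u))`. -/
theorem gibbs_variational_principle {U : Type*} [Fintype U] [Nonempty U]
    (q : U → ℝ) (hq0 : ∀ u, 0 < q u) (hq1 : ∑ u, q u = 1) (c : U → ℝ) :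
    let Z : ℝ := ∑ u, q u * Real.exp (-(c u))
    let pstar : U → ℝ := fun u => q u * Real.exp (-(c u)) / Z
    (∀ p : U → ℝ, (∀ u, 0 ≤ p u) → (∑ u, p u = 1) →
        (KL pstar q + ∑ u, pstar u * c u ≤ KL p q + ∑ u, p u * c u) ∧
        (KL p q + ∑ u, p u * c u = KL pstar q + ∑ u, pstar u * c u → p = pstar)) ∧
      KL pstar q + ∑ u, pstar u * c u = -Real.log Z := by
  intro Z pstar
  have hZ : 0 < Z := Finset.sum_pos (fun u _ => mul_pos (hq0 u) (Real.exp_pos _)) Finset.univ_nonempty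
  have hps_pos : ∀ u, 0 < pstar u := fun u => div_pos (mul_pos (hq0 u) (Real.exp_pos _)) hZ
  have hsum_pstar : ∑ u, pstar u = 1 := by
    show ∑ u, q u * Real.exp (-(c u)) / Z = 1
    rw [← Finset.sum_div]
    exact div_self hZ.ne'
  have key : ∀ p : U → ℝ, (∀ u, 0 ≤ p u) → (∑ u, p u = 1) →
      KL p q + ∑ u, p u * c u = KL p pstar - Real.log Z := by
    intro p hp hps
    have hterm : ∀ u, p u * Real.log (p u / q u) + p u * c u
        = p u * Real.log (p u / pstar u) - p u * Real.log Z := by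
      intro u
      rcases eq_or_lt_of_le (hp u) with h0 | h0
      · simp [← h0]
      · have hlog : Real.log (p u / pstar u)
            = Real.log (p u / q u) + c u + Real.log Z := by
          show Real.log (p u / (q u * Real.exp (-(c u)) / Z)) = _
          rw [Real.log_div h0.ne' (hps_pos u).ne',
            Real.log_div (mul_pos (hq0 u) (Real.exp_pos _)).ne' hZ.ne',
            Real.log_mul (hq0 u).ne' (Real.exp_ne_zero _),
            Real.log_exp, Real.log_div h0.ne' (hq0 u).ne']
          ring
        rw [hlog]; ring
    calc KL p q + ∑ u, p u * c u
        = ∑ u, (p u * Real.log (p u / q u) + p u * c u) := by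
          rw [Finset.sum_add_distrib]; rfl
      _ = ∑ u, (p u * Real.log (p u / pstar u) - p u * Real.log Z) :=
          Finset.sum_congr rfl (fun u _ => hterm u)
      _ = KL p pstar - Real.log Z := by
          rw [Finset.sum_sub_distrib, ← Finset.sum_mul, hps, one_mul]; rfl
  have hKLself : KL pstar pstar = 0 := by
    unfold KL
    apply Finset.sum_eq_zero
    intro u _
    rw [div_self (hps_pos u).ne', Real.log_one, mul_zero]
  have hmin : KL pstar q + ∑ u, pstar u * c u = -Real.log Z := by
    rw [key pstar (fun u => (hps_pos u).le) hsum_pstar, hKLself]; ring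
  refine ⟨fun p hp hps => ?_, hmin⟩
  have hid := key p hp hps
  have hnn := kl_nonneg_strict p pstar hp hps_pos hps hsum_pstar
  constructor
  · rw [hid, hmin]; linarith [hnn.1]
  · intro heq
    apply hnn.2
    rw [hid, hmin] at heq
    linarith
end

section
/- One-step optimal policy (Theorem 1 for N = 1): given pmfs p^x(·|u) on X for each u ∈ U, full-support pmfs q^x(·|u) on X and q^u on U, and a cost c : X → ℝ, the unique minimizer over policies π (pmfs on U) of J(π) = D_KL(π||q^u) + Σ_u π(u)·[ D_KL(p^x(·|u)||q^x(·|u)) + Σ_x p^x(x|u)·c(x) ] is π*(u) = p̄(u)·exp(−E_{p^x(·|u)}[c]) / Σ_{u'} p̄(u')·exp(−E_{p^x(·|u')}[c]), where p̄(u) = q^u(u)·exp(−D_KL(p^x(·|u)||q^x(·|u))). -/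
lemma term_ge {p q : ℝ} (hp : 0 ≤ p) (hq : 0 < q) :
    p - q ≤ p * Real.log (p / q) := by
  rcases eq_or_lt_of_le hp with h | h
  · simp [← h]; linarith
  · have hqp : 0 < q / p := by positivity
    have h1 := Real.log_le_sub_one_of_pos hqp
    have hlog : Real.log (p / q) = - Real.log (q / p) := by
      rw [← Real.log_inv]; congr 1; field_simp
    rw [hlog]
    have h2 : p * Real.log (q / p) ≤ p * (q / p - 1) :=
      mul_le_mul_of_nonneg_left h1 hp
    have h3 : p * (q / p - 1) = q - p := by field_simp
    nlinarith

lemma term_gt {p q : ℝ} (hp : 0 ≤ p) (hq : 0 < q) (hne : p ≠ q) :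
    p - q < p * Real.log (p / q) := by
  rcases eq_or_lt_of_le hp with h | h
  · simp [← h]; linarith
  · have hqp : 0 < q / p := by positivity
    have hne' : q / p ≠ 1 := by
      intro habs
      apply hne
      field_simp at habs
      linarith
    have h1 := Real.log_lt_sub_one_of_pos hqp hne'
    have hlog : Real.log (p / q) = - Real.log (q / p) := by
      rw [← Real.log_inv]; congr 1; field_simp
    rw [hlog]
    have h2 : p * Real.log (q / p) < p * (q / p - 1) :=
      mul_lt_mul_of_pos_left h1 h
    have h3 : p * (q / p - 1) = q - p := by field_simp
    nlinarith

lemma gibbs {α : Type*} [Fintype α] (p q : α → ℝ)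
    (hp0 : ∀ a, 0 ≤ p a) (hq0 : ∀ a, 0 < q a)
    (hp1 : ∑ a, p a = 1) (hq1 : ∑ a, q a = 1) :
    0 ≤ KL p q ∧ (p ≠ q → 0 < KL p q) := by
  have hsum : ∑ a, (p a - q a) = 0 := by
    rw [Finset.sum_sub_distrib, hp1, hq1]; ring
  constructor
  · have : ∑ a, (p a - q a) ≤ KL p q :=
      Finset.sum_le_sum fun a _ => term_ge (hp0 a) (hq0 a)
    linarith
  · intro hne
    obtain ⟨a, ha⟩ := Function.ne_iff.mp hne
    have : ∑ a, (p a - q a) < KL p q :=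
      Finset.sum_lt_sum (fun a _ => term_ge (hp0 a) (hq0 a))
        ⟨a, Finset.mem_univ a, term_gt (hp0 a) (hq0 a) ha⟩
    linarith

lemma key_identity {U : Type*} [Fintype U] [Nonempty U] (qu a : U → ℝ) (hqu0 : ∀ u, 0 < qu u)
    (π : U → ℝ) (hπ0 : ∀ u, 0 ≤ π u) (hπ1 : ∑ u, π u = 1) :
    KL π qu + ∑ u, π u * a u =
      KL π (fun u => qu u * Real.exp (-(a u)) / ∑ u', qu u' * Real.exp (-(a u')))
        - Real.log (∑ u', qu u' * Real.exp (-(a u'))) := by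
  set Z := ∑ u', qu u' * Real.exp (-(a u')) with hZdef
  have hZ : 0 < Z := Finset.sum_pos (fun u _ => mul_pos (hqu0 u) (Real.exp_pos _))
    ⟨Classical.arbitrary U, Finset.mem_univ _⟩
  unfold KL
  rw [← Finset.sum_add_distrib]
  have : (∑ u, π u * Real.log (π u / (qu u * Real.exp (-(a u)) / Z))) - Real.log Z
      = ∑ u, (π u * Real.log (π u / (qu u * Real.exp (-(a u)) / Z)) - π u * Real.log Z) := by
    rw [Finset.sum_sub_distrib, ← Finset.sum_mul, hπ1, one_mul]
  rw [this]
  apply Finset.sum_congr rfl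
  intro u _
  rcases eq_or_lt_of_le (hπ0 u) with h | h
  · simp [← h]
  · have hq := hqu0 u
    have he : (0:ℝ) < Real.exp (-(a u)) := Real.exp_pos _
    rw [Real.log_div (ne_of_gt h) (by positivity),
        Real.log_div (ne_of_gt h) (by positivity),
        Real.log_div (by positivity) (ne_of_gt hZ),
        Real.log_mul (ne_of_gt hq) (ne_of_gt he), Real.log_exp]
    ring

/-- One-step optimal policy (Theorem 1 of the paper for N = 1): the unique
minimizer of `J(π) = D_KL(π‖qᵘ) + Σ_u π u * (D_KL(pˣ(·|u)‖qˣ(·|u)) + E_{pˣ(·|u)}[c])`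
over policies is the exponentially twisted policy. -/
theorem one_step_optimal_policy {X U : Type*} [Fintype X] [Fintype U]
    [Nonempty X] [Nonempty U]
    (px qx : U → X → ℝ) (qu : U → ℝ) (c : X → ℝ)
    (hpx0 : ∀ u x, 0 ≤ px u x) (hpx1 : ∀ u, ∑ x, px u x = 1)
    (hqx0 : ∀ u x, 0 < qx u x) (hqx1 : ∀ u, ∑ x, qx u x = 1)
    (hqu0 : ∀ u, 0 < qu u) (hqu1 : ∑ u, qu u = 1) :
    let J : (U → ℝ) → ℝ := fun π =>
      KL π qu + ∑ u, π u * (KL (px u) (qx u) + ∑ x, px u x * c x)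
    let pbar : U → ℝ := fun u => qu u * Real.exp (-(KL (px u) (qx u)))
    let pstar : U → ℝ := fun u =>
      pbar u * Real.exp (-(∑ x, px u x * c x)) /
        ∑ u', pbar u' * Real.exp (-(∑ x, px u' x * c x))
    ∀ π : U → ℝ, (∀ u, 0 ≤ π u) → (∑ u, π u = 1) →
      J pstar ≤ J π ∧ (J π = J pstar → π = pstar) := by
  intro J pbar pstar π hπ0 hπ1
  set A : U → ℝ := fun u => KL (px u) (qx u) + ∑ x, px u x * c x with hA
  set Z : ℝ := ∑ u', qu u' * Real.exp (-(A u')) with hZdef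
  have hZ : 0 < Z := Finset.sum_pos (fun u _ => mul_pos (hqu0 u) (Real.exp_pos _))
    ⟨Classical.arbitrary U, Finset.mem_univ _⟩
  have hrw : ∀ u, pbar u * Real.exp (-(∑ x, px u x * c x)) = qu u * Real.exp (-(A u)) := by
    intro u
    simp only [pbar, hA, mul_assoc, ← Real.exp_add]
    ring_nf
  have hps : pstar = fun u => qu u * Real.exp (-(A u)) / Z := by
    funext u
    simp only [pstar, hZdef]
    rw [hrw u]
    congr 1
    exact Finset.sum_congr rfl fun u' _ => hrw u'
  have hps0 : ∀ u, 0 < pstar u := by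
    intro u
    rw [hps]
    exact div_pos (mul_pos (hqu0 u) (Real.exp_pos _)) hZ
  have hps1 : ∑ u, pstar u = 1 := by
    rw [hps]
    rw [← Finset.sum_div]
    exact div_self (ne_of_gt hZ)
  have hJπ : J π = KL π pstar - Real.log Z := by
    simp only [J, ← hA]
    rw [key_identity qu A hqu0 π hπ0 hπ1, hps]
  have hJps : J pstar = - Real.log Z := by
    simp only [J, ← hA]
    rw [key_identity qu A hqu0 pstar (fun u => le_of_lt (hps0 u)) hps1, ← hps]
    have : KL pstar pstar = 0 := by
      unfold KL
      apply Finset.sum_eq_zero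
      intro u _
      rw [div_self (ne_of_gt (hps0 u)), Real.log_one, mul_zero]
    rw [this]
    ring
  obtain ⟨hge, hstrict⟩ := gibbs π pstar hπ0 hps0 hπ1 hps1
  constructor
  · rw [hJπ, hJps]; linarith
  · intro heq
    by_contra hne
    have := hstrict hne
    rw [hJπ, hJps] at heq
    linarith
end

section
/- The minimum value in the one-step problem equals the negative log-partition: with the setup of the one-step optimal policy, min_π J(π) = −log( Σ_u q^u(u)·exp( −D_KL(p^x(·|u)||q^x(·|u)) − Σ_x p^x(x|u)·c(x) ) ). -/
lemma gibbs_aux {U : Type*} [Fintype U] (π r : U → ℝ)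
    (hπ : ∀ u, 0 ≤ π u) (hr : ∀ u, 0 < r u)
    (hπ1 : ∑ u, π u = 1) (hr1 : ∑ u, r u = 1) :
    0 ≤ ∑ u, π u * Real.log (π u / r u) := by
  have key : ∀ u, π u - r u ≤ π u * Real.log (π u / r u) := by
    intro u
    rcases eq_or_lt_of_le (hπ u) with h0 | hp
    · simp [← h0, (hr u).le]
    · have h := Real.log_le_sub_one_of_pos (div_pos (hr u) hp)
      have hlog : Real.log (π u / r u) = - Real.log (r u / π u) := by
        rw [← Real.log_inv, inv_div]
      rw [hlog]
      have h2 := mul_le_mul_of_nonneg_left h hp.le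
      have heq : π u * (r u / π u - 1) = r u - π u := by
        field_simp
      nlinarith
  have h := Finset.sum_le_sum (s := Finset.univ) (fun u _ => key u)
  rw [Finset.sum_sub_distrib, hπ1, hr1] at h
  simpa using h

/-- The minimum value of the one-step problem equals the negative
log-partition. -/
theorem one_step_minimum_value {X U : Type*} [Fintype X] [Fintype U]
    [Nonempty X] [Nonempty U]
    (px qx : U → X → ℝ) (qu : U → ℝ) (c : X → ℝ)
    (hpx0 : ∀ u x, 0 ≤ px u x) (hpx1 : ∀ u, ∑ x, px u x = 1)
    (hqx0 : ∀ u x, 0 < qx u x) (hqx1 : ∀ u, ∑ x, qx u x = 1)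
    (hqu0 : ∀ u, 0 < qu u) (hqu1 : ∑ u, qu u = 1) :
    IsLeast
      {y : ℝ | ∃ π : U → ℝ, (∀ u, 0 ≤ π u) ∧ (∑ u, π u = 1) ∧
        y = KL π qu + ∑ u, π u * (KL (px u) (qx u) + ∑ x, px u x * c x)}
      (-Real.log (∑ u, qu u *
        Real.exp (-(KL (px u) (qx u)) - ∑ x, px u x * c x))) := by
  set F : U → ℝ := fun u => KL (px u) (qx u) + ∑ x, px u x * c x with hF
  have hexp : ∀ u, Real.exp (-(KL (px u) (qx u)) - ∑ x, px u x * c x)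
      = Real.exp (-(F u)) := by
    intro u; congr 1; simp [hF]; ring
  set Z : ℝ := ∑ u, qu u * Real.exp (-(F u)) with hZ
  have hZsum : (∑ u, qu u *
      Real.exp (-(KL (px u) (qx u)) - ∑ x, px u x * c x)) = Z := by
    simp [hZ, hexp]
  have hZpos : 0 < Z := by
    apply Finset.sum_pos (fun u _ => mul_pos (hqu0 u) (Real.exp_pos _))
    exact Finset.univ_nonempty
  rw [hZsum]
  set r : U → ℝ := fun u => qu u * Real.exp (-(F u)) / Z with hr
  have hrpos : ∀ u, 0 < r u :=
    fun u => div_pos (mul_pos (hqu0 u) (Real.exp_pos _)) hZpos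
  have hr1 : ∑ u, r u = 1 := by
    simp only [hr]
    rw [← Finset.sum_div, ← hZ, div_self hZpos.ne']
  constructor
  · refine ⟨r, fun u => (hrpos u).le, hr1, ?_⟩
    have hlog : ∀ u, Real.log (r u / qu u) = -(F u) - Real.log Z := by
      intro u
      have : r u / qu u = Real.exp (-(F u)) / Z := by
        rw [hr]; dsimp only
        rw [mul_div_assoc, mul_div_cancel_left₀ _ (hqu0 u).ne']
      rw [this, Real.log_div (Real.exp_ne_zero _) hZpos.ne',
        Real.log_exp]
    have : KL r qu = ∑ u, r u * (-(F u) - Real.log Z) := by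
      unfold KL; exact Finset.sum_congr rfl fun u _ => by rw [hlog u]
    rw [this]
    have h1 : ∑ u, r u * (-(F u) - Real.log Z)
        = -(∑ u, r u * F u) - Real.log Z := by
      rw [show (∑ u, r u * (-(F u) - Real.log Z))
          = ∑ u, (-(r u * F u) - r u * Real.log Z) from
        Finset.sum_congr rfl fun u _ => by ring]
      rw [Finset.sum_sub_distrib, Finset.sum_neg_distrib,
        ← Finset.sum_mul, hr1]
      ring
    rw [h1]; ring
  · rintro y ⟨π, hπ0, hπ1, rfl⟩
    have hgibbs := gibbs_aux π r hπ0 hrpos hπ1 hr1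
    have hterm : ∀ u, π u * Real.log (π u / r u)
        = π u * Real.log (π u / qu u) + π u * F u + π u * Real.log Z := by
      intro u
      rcases eq_or_lt_of_le (hπ0 u) with h0 | hp
      · simp [← h0]
      · have hru : r u ≠ 0 := (hrpos u).ne'
        rw [Real.log_div hp.ne' hru, Real.log_div hp.ne' (hqu0 u).ne',
          hr, Real.log_div (mul_pos (hqu0 u) (Real.exp_pos _)).ne' hZpos.ne',
          Real.log_mul (hqu0 u).ne' (Real.exp_ne_zero _), Real.log_exp]
        ring
    have hsum : ∑ u, π u * Real.log (π u / r u)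
        = KL π qu + (∑ u, π u * F u) + Real.log Z := by
      rw [show KL π qu + (∑ u, π u * F u) + Real.log Z
          = (∑ u, π u * Real.log (π u / qu u)) + (∑ u, π u * F u)
            + (∑ u, π u * Real.log Z) by
        rw [← Finset.sum_mul, hπ1]; simp [KL]]
      rw [← Finset.sum_add_distrib, ← Finset.sum_add_distrib]
      exact Finset.sum_congr rfl fun u _ => hterm u
    rw [hsum] at hgibbs
    simp only [hF] at *
    linarith
end
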